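/- Let G be a relevant position of the game influence, let x, x' ∈ L(G) and y ∈ R(G). Then: (1) if x' ∈ Rmv(G,x), then Rmv(G,x') ⊆ Rmv(G,x) and (G_{x'})_x = G_x; (2) if x' ∉ Rmv(G,x) and x ∉ Rmv(G,x'), then (G_{x'})_x = (G_x)_{x'}; (3) if x ∉ Rmv(G,y), then Rmv(G_x, y) = Rmv(G,y) and (G_x)_y = (G_y)_x. -/

import Mathlib

namespace Influence

open Finset

/-- A position of the game `influence`: a finite directed graph with vertex set `V`,
arc set `A`, and the set `left` of Left (black) vertices; Right's vertices are `V \ left`. -/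
structure Pos (α : Type) [DecidableEq α] where
  V : Finset α
  A : Finset (α × α)
  left : Finset α

variable {α : Type} [DecidableEq α]

namespace Pos

/-- The set of Right vertices. -/
def R (G : Pos α) : Finset α := G.V \ G.left

/-- Well-formedness: arcs join vertices, and Left vertices are vertices. -/
def WF (G : Pos α) : Prop :=
  (∀ p ∈ G.A, p.1 ∈ G.V ∧ p.2 ∈ G.V) ∧ G.left ⊆ G.V

open Classical in
/-- `Succ G x`: vertices reachable from `x` by a directed path (including `x` itself). -/
noncomputable def Succ (G : Pos α) (x : α) : Finset α :=
  G.V.filter (fun z => Relation.ReflTransGen (fun a b => (a, b) ∈ G.A) x z)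

open Classical in
/-- `Pred G y`: vertices from which `y` is reachable by a directed path (including `y`). -/
noncomputable def Pred (G : Pos α) (y : α) : Finset α :=
  G.V.filter (fun z => Relation.ReflTransGen (fun a b => (a, b) ∈ G.A) z y)

open Classical in
noncomputable def ForcL (G : Pos α) : Finset α :=
  G.left.filter (fun x => G.Succ x ⊆ G.left)

open Classical in
noncomputable def ForcR (G : Pos α) : Finset α :=
  G.R.filter (fun y => G.Pred y ⊆ G.R)

noncomputable def Forc (G : Pos α) : Finset α := G.ForcL ∪ G.ForcR

/-- A relevant position: no forced vertices. -/
def Relevant (G : Pos α) : Prop := G.Forc = ∅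

/-- The induced subgraph `G ∖ S` on `V(G) \ S`. -/
def erase (G : Pos α) (S : Finset α) : Pos α :=
  ⟨G.V \ S, G.A.filter (fun p => p.1 ∈ G.V \ S ∧ p.2 ∈ G.V \ S), G.left \ S⟩

open Classical in
/-- The set of vertices removed when playing `x`:  for `x ∈ L`,
`Rmv(G,x) = Succ(G,x) ∪ Forc(G ∖ Succ(G,x))`; for `y ∈ R`,
`Rmv(G,y) = Pred(G,y) ∪ Forc(G ∖ Pred(G,y))`. -/
noncomputable def Rmv (G : Pos α) (x : α) : Finset α :=
  if x ∈ G.left then G.Succ x ∪ (G.erase (G.Succ x)).Forc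
  else G.Pred x ∪ (G.erase (G.Pred x)).Forc

/-- The resulting relevant position `G_x` after the move `x`. -/
noncomputable def move (G : Pos α) (x : α) : Pos α := G.erase (G.Rmv x)

mutual
/-- Auxiliary (fuel-indexed) score of Left playing first. -/
noncomputable def sL1Aux : ℕ → Pos α → ℕ
  | 0, _ => 0
  | k + 1, G =>
      if G.left.Nonempty then
        G.left.sup (fun x => (G.Rmv x).card + sL2Aux k (G.move x))
      else 0

/-- Auxiliary (fuel-indexed) score of Left playing second. -/
noncomputable def sL2Aux : ℕ → Pos α → ℕ
  | 0, _ => 0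
  | k + 1, G =>
      if h : G.R.Nonempty then G.R.inf' h (fun y => sL1Aux k (G.move y))
      else 0
end

mutual
/-- Auxiliary (fuel-indexed) score of Right playing first. -/
noncomputable def sR1Aux : ℕ → Pos α → ℕ
  | 0, _ => 0
  | k + 1, G =>
      if G.R.Nonempty then
        G.R.sup (fun y => (G.Rmv y).card + sR2Aux k (G.move y))
      else 0

/-- Auxiliary (fuel-indexed) score of Right playing second. -/
noncomputable def sR2Aux : ℕ → Pos α → ℕ
  | 0, _ => 0
  | k + 1, G =>
      if h : G.left.Nonempty then G.left.inf' h (fun x => sR1Aux k (G.move x))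
      else 0
end

/-- `s^L_1(G)`: the score of Left when Left plays first (optimal play). -/
noncomputable def sL1 (G : Pos α) : ℕ := sL1Aux G.V.card G

/-- `s^L_2(G)`: the score of Left when Right plays first (optimal play). -/
noncomputable def sL2 (G : Pos α) : ℕ := sL2Aux G.V.card G

/-- `s^R_1(G)`: the score of Right when Right plays first (optimal play). -/
noncomputable def sR1 (G : Pos α) : ℕ := sR1Aux G.V.card G

/-- `s^R_2(G)`: the score of Right when Left plays first (optimal play). -/
noncomputable def sR2 (G : Pos α) : ℕ := sR2Aux G.V.card G

/-- The Left score `Ls(G) = s^L_1(G) - s^R_2(G)`. -/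
noncomputable def Ls (G : Pos α) : ℤ := (G.sL1 : ℤ) - (G.sR2 : ℤ)

/-- The Right score `Rs(G) = s^L_2(G) - s^R_1(G)`. -/
noncomputable def Rs (G : Pos α) : ℤ := (G.sL2 : ℤ) - (G.sR1 : ℤ)

/-- Disjoint union (game sum) of two positions. -/
def union (G G' : Pos α) : Pos α := ⟨G.V ∪ G'.V, G.A ∪ G'.A, G.left ∪ G'.left⟩

/-- The empty position. -/
protected def empty : Pos α := ⟨∅, ∅, ∅⟩

end Pos

/-- The sum of a finite list of positions. -/
def sumList (l : List (Pos α)) : Pos α := l.foldr Pos.union Pos.empty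

open Classical in
/-- `G` is a segment: its vertex set is a set of at least two consecutive integers,
Left's vertices are the even ones, Right's the odd ones, and there is an arc from each
even vertex to each of its (odd) neighbours `±1` lying in the vertex set. -/
def IsSegment (G : Pos ℤ) : Prop :=
  2 ≤ G.V.card ∧
  (∀ i j k : ℤ, i ∈ G.V → j ∈ G.V → i ≤ k → k ≤ j → k ∈ G.V) ∧
  G.left = G.V.filter (fun n => Even n) ∧
  G.A = (G.V ×ˢ G.V).filter (fun p => Even p.1 ∧ (p.2 = p.1 + 1 ∨ p.2 = p.1 - 1))

/-- `G` is the finite disjoint union (game sum) of the list `l` of segments. -/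
def IsSegUnion (G : Pos ℤ) (l : List (Pos ℤ)) : Prop :=
  (∀ H ∈ l, IsSegment H) ∧
  l.Pairwise (fun H H' => Disjoint H.V H'.V) ∧
  G = sumList l


open Classical in
/-- `G` is an alternated cycle: obtained from a segment `S` with an even number of
vertices by adding the arc `(x, y)` where `x` is the endpoint of `S` in `L` (even) and
`y` the endpoint in `R` (odd). -/
def IsAltCycle (G : Pos ℤ) : Prop :=
  ∃ (S : Pos ℤ) (x y : ℤ), IsSegment S ∧ Even S.V.card ∧
    x ∈ S.V ∧ y ∈ S.V ∧ Even x ∧ ¬ Even y ∧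
    (∀ z ∈ S.V, min x y ≤ z ∧ z ≤ max x y) ∧
    G.V = S.V ∧ G.left = S.left ∧ G.A = insert (x, y) S.A

open Classical in
/-- `T` is (a copy of) the oriented tree `T_n^c`: a rooted tree of depth `n+1`, all arcs
oriented from parent to child, in which every vertex at level `k ≤ n-1` has exactly `3`
children, every vertex at level `n` has exactly `c` children, the leaves (level `n+1`)
are the Right vertices and all other vertices are Left vertices. -/
def IsTnc (n c : ℕ) (T : Pos α) : Prop :=
  T.WF ∧ ∃ lvl : α → ℕ,
    (∀ v ∈ T.V, lvl v ≤ n + 1) ∧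
    T.left = T.V.filter (fun v => lvl v ≤ n) ∧
    (∃! r, r ∈ T.V ∧ lvl r = 0) ∧
    (∀ p ∈ T.A, lvl p.2 = lvl p.1 + 1) ∧
    (∀ v ∈ T.V, 0 < lvl v → ∃! u, (u, v) ∈ T.A) ∧
    (∀ v ∈ T.V, lvl v < n → (T.V.filter (fun w => (v, w) ∈ T.A)).card = 3) ∧
    (∀ v ∈ T.V, lvl v = n → (T.V.filter (fun w => (v, w) ∈ T.A)).card = c)

/-- `J` is (a copy of) `J_n^c`, the disjoint union of two disjoint copies of `T_n^c`. -/
def IsJnc (n c : ℕ) (J : Pos α) : Prop :=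
  ∃ T1 T2 : Pos α, IsTnc n c T1 ∧ IsTnc n c T2 ∧ Disjoint T1.V T2.V ∧ J = T1.union T2

end Influence

open Influence Influence.Pos Finset

/-!
In a well-formed position a move deletes `removal W = W ∪ forcedBy W`, where `W` is `Succ(G,x)`
for a Left move and `Pred(G,y)` for a Right move, and `forcedBy W` consists of the Left vertices
whose successors all lie in `L ∪ W` and the Right vertices whose predecessors all lie in `R ∪ W`.
Deleting a set `C` that is closed under successors or under predecessors does not change
reachability between the remaining vertices, so a move in `G ∖ C` deletes `removal (C ∪ W)` from `G`.
In a relevant position `removal` acts as a closure on such sets: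
`removal (removal W ∪ U) = removal (W ∪ U)`. Hence two successive moves delete
`removal (W ∪ W')`, which is symmetric in the two moves. For a Left move `x` and a Right move `y`
this set splits as `Rmv(G,x) ∪ Rmv(G,y)`, a disjoint union when `x ∉ Rmv(G,y)`.
-/

namespace Influence.Pos

variable {α : Type} [DecidableEq α] {G : Pos α} {C K S U W : Finset α} {a b x x' y : α}

def Reach (G : Pos α) : α → α → Prop :=
  Relation.ReflTransGen fun a b => (a, b) ∈ G.A

theorem mem_Succ : b ∈ G.Succ a ↔ b ∈ G.V ∧ G.Reach a b := by
  simp [Succ, Reach]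

theorem mem_Pred : a ∈ G.Pred b ↔ a ∈ G.V ∧ G.Reach a b := by
  simp [Pred, Reach]

theorem mem_R : a ∈ G.R ↔ a ∈ G.V ∧ a ∉ G.left := mem_sdiff

theorem Pred_eq_empty (hwf : G.WF) (hb : b ∉ G.V) : G.Pred b = ∅ := by
  refine eq_empty_of_forall_notMem fun a ha => hb ?_
  obtain ⟨haV, hab⟩ := mem_Pred.1 ha
  rcases hab.cases_tail with rfl | ⟨c, -, hcb⟩
  · exact haV
  · exact (hwf.1 _ hcb).2

theorem erase_V : (G.erase C).V = G.V \ C := rfl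

theorem erase_left : (G.erase C).left = G.left \ C := rfl

theorem erase_R : (G.erase C).R = G.R \ C := by
  ext; simp [R, erase]; tauto

theorem mem_erase_A : (a, b) ∈ (G.erase C).A ↔ (a, b) ∈ G.A ∧ a ∈ G.V \ C ∧ b ∈ G.V \ C := by
  simp [erase]

theorem WF.erase (hwf : G.WF) (C : Finset α) : (G.erase C).WF :=
  ⟨fun _ hp => (mem_erase_A.1 hp).2, sdiff_subset_sdiff hwf.2 le_rfl⟩

theorem erase_erase (G : Pos α) (C S : Finset α) : (G.erase C).erase S = G.erase (C ∪ S) := by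
  simp only [erase, mk.injEq]
  refine ⟨?_, ?_, ?_⟩ <;> ext <;> simp <;> tauto

def IsFwdClosed (G : Pos α) (W : Finset α) : Prop :=
  ∀ ⦃a b⦄, (a, b) ∈ G.A → a ∈ W → b ∈ W

def IsBwdClosed (G : Pos α) (W : Finset α) : Prop :=
  ∀ ⦃a b⦄, (a, b) ∈ G.A → b ∈ W → a ∈ W

theorem IsFwdClosed.mem_of_reach (hW : G.IsFwdClosed W) (h : G.Reach a b) (ha : a ∈ W) :
    b ∈ W := by
  induction h with
  | refl => exact ha
  | tail _ hcb ih => exact hW hcb ih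

theorem IsBwdClosed.mem_of_reach (hW : G.IsBwdClosed W) (h : G.Reach a b) (hb : b ∈ W) :
    a ∈ W := by
  induction h using Relation.ReflTransGen.head_induction_on with
  | refl => exact hb
  | head hac _ ih => exact hW hac ih

theorem IsFwdClosed.Succ_subset (hW : G.IsFwdClosed W) (ha : a ∈ W) : G.Succ a ⊆ W :=
  fun _ hb => hW.mem_of_reach (mem_Succ.1 hb).2 ha

theorem IsFwdClosed.disjoint_Pred (hW : G.IsFwdClosed W) (hb : b ∉ W) :
    Disjoint (G.Pred b) W :=
  disjoint_left.2 fun _ ha haW => hb (hW.mem_of_reach (mem_Pred.1 ha).2 haW)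

theorem IsBwdClosed.disjoint_Succ (hW : G.IsBwdClosed W) (ha : a ∉ W) :
    Disjoint (G.Succ a) W :=
  disjoint_left.2 fun _ hb hbW => ha (hW.mem_of_reach (mem_Succ.1 hb).2 hbW)

theorem isFwdClosed_Succ (hwf : G.WF) : G.IsFwdClosed (G.Succ a) :=
  fun _ _ hbc hb => mem_Succ.2 ⟨(hwf.1 _ hbc).2, (mem_Succ.1 hb).2.tail hbc⟩

theorem isBwdClosed_Pred (hwf : G.WF) : G.IsBwdClosed (G.Pred b) :=
  fun _ _ hac hc => mem_Pred.2 ⟨(hwf.1 _ hac).1, .head hac (mem_Pred.1 hc).2⟩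

theorem Reach.of_erase (h : (G.erase C).Reach a b) : G.Reach a b :=
  Relation.ReflTransGen.mono (fun _ _ hp => (mem_erase_A.1 hp).1) _ _ h

/-- A path between two vertices outside `C` cannot visit `C`, since it could not come back. -/
theorem reach_erase_iff (hwf : G.WF) (hC : G.IsFwdClosed C ∨ G.IsBwdClosed C) (ha : a ∉ C)
    (hb : b ∉ C) : (G.erase C).Reach a b ↔ G.Reach a b := by
  refine ⟨Reach.of_erase, fun h => ?_⟩
  induction h with
  | refl => exact .refl
  | @tail c b hac hcb ih =>
    have hc : c ∉ C := fun hc =>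
      hC.elim (fun hF => hb (hF hcb hc)) (fun hB => ha (hB.mem_of_reach hac hc))
    exact (ih hc).tail (mem_erase_A.2
      ⟨hcb, mem_sdiff.2 ⟨(hwf.1 _ hcb).1, hc⟩, mem_sdiff.2 ⟨(hwf.1 _ hcb).2, hb⟩⟩)

theorem Succ_erase (hwf : G.WF) (hC : G.IsFwdClosed C ∨ G.IsBwdClosed C) (ha : a ∉ C) :
    (G.erase C).Succ a = G.Succ a \ C := by
  ext b
  by_cases hb : b ∈ C
  · simp [mem_Succ, erase_V, hb]
  · simp [mem_Succ, erase_V, hb, reach_erase_iff hwf hC ha hb]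

theorem Pred_erase (hwf : G.WF) (hC : G.IsFwdClosed C ∨ G.IsBwdClosed C) (hb : b ∉ C) :
    (G.erase C).Pred b = G.Pred b \ C := by
  ext a
  by_cases ha : a ∈ C
  · simp [mem_Pred, erase_V, ha]
  · simp [mem_Pred, erase_V, ha, reach_erase_iff hwf hC ha hb]

noncomputable def forcedBy (G : Pos α) (W : Finset α) : Finset α :=
  G.left.filter (fun a => G.Succ a ⊆ G.left ∪ W) ∪ G.R.filter (fun b => G.Pred b ⊆ G.R ∪ W)

noncomputable def removal (G : Pos α) (W : Finset α) : Finset α := W ∪ G.forcedBy W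

theorem mem_forcedBy :
    a ∈ G.forcedBy W ↔ a ∈ G.left ∧ G.Succ a ⊆ G.left ∪ W ∨ a ∈ G.R ∧ G.Pred a ⊆ G.R ∪ W := by
  simp [forcedBy]

theorem Forc_eq_forcedBy_empty (G : Pos α) : G.Forc = G.forcedBy ∅ := by
  ext; simp [Forc, ForcL, ForcR, forcedBy]

theorem forcedBy_mono (h : W ⊆ U) : G.forcedBy W ⊆ G.forcedBy U := by
  intro a
  simp only [mem_forcedBy]
  rintro (⟨ha, hSucc⟩ | ⟨ha, hPred⟩)
  · exact .inl ⟨ha, hSucc.trans (union_subset_union_right h)⟩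
  · exact .inr ⟨ha, hPred.trans (union_subset_union_right h)⟩

theorem subset_removal : W ⊆ G.removal W := subset_union_left

theorem forcedBy_subset_removal : G.forcedBy W ⊆ G.removal W := subset_union_right

theorem removal_mono (h : W ⊆ U) : G.removal W ⊆ G.removal U :=
  union_subset_union h (forcedBy_mono h)

private theorem sdiff_subset_sdiff_union_iff {s t : Finset α} :
    s \ C ⊆ t \ C ∪ S ↔ s ⊆ t ∪ (C ∪ S) := by
  simp only [subset_iff, mem_sdiff, mem_union]
  exact forall_congr' fun _ => by tauto

theorem forcedBy_erase (hwf : G.WF) (hC : G.IsFwdClosed C ∨ G.IsBwdClosed C) (S : Finset α) :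
    (G.erase C).forcedBy S = G.forcedBy (C ∪ S) \ C := by
  ext a
  by_cases ha : a ∈ C
  · simp [mem_forcedBy, erase_left, erase_R, ha]
  · rw [mem_sdiff, mem_forcedBy, mem_forcedBy, erase_left, erase_R, Succ_erase hwf hC ha,
      Pred_erase hwf hC ha, sdiff_subset_sdiff_union_iff, sdiff_subset_sdiff_union_iff]
    simp [ha]

theorem removal_erase (hwf : G.WF) (hC : G.IsFwdClosed C ∨ G.IsBwdClosed C)
    (hS : Disjoint S C) : (G.erase C).removal S = G.removal (C ∪ S) \ C := by
  rw [removal, removal, forcedBy_erase hwf hC, union_sdiff_distrib, union_sdiff_left,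
    hS.sdiff_eq_left]

theorem Rmv_of_mem_left (hwf : G.WF) (hx : x ∈ G.left) : G.Rmv x = G.removal (G.Succ x) := by
  rw [Rmv, if_pos hx, Forc_eq_forcedBy_empty, forcedBy_erase hwf (.inl (isFwdClosed_Succ hwf)),
    union_empty, union_sdiff_self_eq_union, removal]

theorem Rmv_of_not_mem_left (hwf : G.WF) (hy : y ∉ G.left) : G.Rmv y = G.removal (G.Pred y) := by
  rw [Rmv, if_neg hy, Forc_eq_forcedBy_empty, forcedBy_erase hwf (.inr (isBwdClosed_Pred hwf)),
    union_empty, union_sdiff_self_eq_union, removal]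

theorem Rmv_erase_of_mem_left (hwf : G.WF) (hC : G.IsFwdClosed C ∨ G.IsBwdClosed C)
    (hx : x ∈ G.left) (hxC : x ∉ C) : (G.erase C).Rmv x = G.removal (C ∪ G.Succ x) \ C := by
  rw [Rmv_of_mem_left (hwf.erase C) (mem_sdiff.2 ⟨hx, hxC⟩), Succ_erase hwf hC hxC,
    removal_erase hwf hC sdiff_disjoint, union_sdiff_self_eq_union]

theorem Rmv_erase_of_not_mem_left (hwf : G.WF) (hC : G.IsFwdClosed C ∨ G.IsBwdClosed C)
    (hy : y ∉ G.left) (hyC : y ∉ C) : (G.erase C).Rmv y = G.removal (C ∪ G.Pred y) \ C := by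
  rw [Rmv_of_not_mem_left (hwf.erase C) fun h => hy (mem_sdiff.1 h).1, Pred_erase hwf hC hyC,
    removal_erase hwf hC sdiff_disjoint, union_sdiff_self_eq_union]

theorem Rmv_erase_of_mem (hwf : G.WF) (hC : G.IsFwdClosed C ∨ G.IsBwdClosed C) (hx : x ∈ C) :
    (G.erase C).Rmv x = G.removal C \ C := by
  have hxV : x ∉ (G.erase C).V := fun h => (mem_sdiff.1 h).2 hx
  rw [Rmv_of_not_mem_left (hwf.erase C) fun h => hxV ((hwf.erase C).2 h),
    Pred_eq_empty (hwf.erase C) hxV, removal_erase hwf hC (disjoint_empty_left C), union_empty]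

theorem erase_move_of_Rmv_eq {D : Finset α} (hCD : C ⊆ D) (h : (G.erase C).Rmv x = D \ C) :
    (G.erase C).move x = G.erase D := by
  rw [move, h, erase_erase, union_sdiff_of_subset hCD]

theorem Relevant.not_Succ_subset_left (hrel : G.Relevant) (ha : a ∈ G.left) :
    ¬ G.Succ a ⊆ G.left := fun h => by
  have : a ∈ G.forcedBy ∅ := mem_forcedBy.2 (.inl ⟨ha, by rwa [union_empty]⟩)
  rw [← Forc_eq_forcedBy_empty, hrel] at this
  exact notMem_empty a this

theorem Relevant.not_Pred_subset_R (hrel : G.Relevant) (hb : b ∈ G.R) : ¬ G.Pred b ⊆ G.R :=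
  fun h => by
  have : b ∈ G.forcedBy ∅ := mem_forcedBy.2 (.inr ⟨hb, by rwa [union_empty]⟩)
  rw [← Forc_eq_forcedBy_empty, hrel] at this
  exact notMem_empty b this

theorem removal_subset_left_union (hrel : G.Relevant) (hW : G.IsFwdClosed W) :
    G.removal W ⊆ G.left ∪ W := by
  intro a ha
  by_cases haW : a ∈ W
  · exact mem_union_right _ haW
  rcases mem_forcedBy.1 ((mem_union.1 ha).resolve_left haW) with ⟨haL, -⟩ | ⟨haR, hPred⟩
  · exact mem_union_left _ haL
  refine absurd (fun c hc => ?_) (hrel.not_Pred_subset_R haR)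
  exact (mem_union.1 (hPred hc)).resolve_right (disjoint_left.1 (hW.disjoint_Pred haW) hc)

theorem removal_subset_R_union (hrel : G.Relevant) (hW : G.IsBwdClosed W) :
    G.removal W ⊆ G.R ∪ W := by
  intro a ha
  by_cases haW : a ∈ W
  · exact mem_union_right _ haW
  rcases mem_forcedBy.1 ((mem_union.1 ha).resolve_left haW) with ⟨haL, hSucc⟩ | ⟨haR, -⟩
  · refine absurd (fun c hc => ?_) (hrel.not_Succ_subset_left haL)
    exact (mem_union.1 (hSucc hc)).resolve_right (disjoint_left.1 (hW.disjoint_Succ haW) hc)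
  · exact mem_union_left _ haR

theorem isFwdClosed_removal (hwf : G.WF) (hrel : G.Relevant) (hW : G.IsFwdClosed W) :
    G.IsFwdClosed (G.removal W) := by
  intro a b hab ha
  by_cases haW : a ∈ W
  · exact subset_removal (hW hab haW)
  have hb : b ∈ G.Succ a := mem_Succ.2 ⟨(hwf.1 _ hab).2, .single hab⟩
  rcases mem_forcedBy.1 ((mem_union.1 ha).resolve_left haW) with ⟨-, hSucc⟩ | ⟨haR, -⟩
  · rcases mem_union.1 (hSucc hb) with hbL | hbW
    · exact forcedBy_subset_removal <| mem_forcedBy.2 <|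
        .inl ⟨hbL, ((isFwdClosed_Succ hwf).Succ_subset hb).trans hSucc⟩
    · exact subset_removal hbW
  · have := (mem_union.1 (removal_subset_left_union hrel hW ha)).resolve_right haW
    exact absurd this (mem_R.1 haR).2

theorem isBwdClosed_removal (hwf : G.WF) (hrel : G.Relevant) (hW : G.IsBwdClosed W) :
    G.IsBwdClosed (G.removal W) := by
  intro a b hab hb
  by_cases hbW : b ∈ W
  · exact subset_removal (hW hab hbW)
  have ha : a ∈ G.Pred b := mem_Pred.2 ⟨(hwf.1 _ hab).1, .single hab⟩
  rcases mem_forcedBy.1 ((mem_union.1 hb).resolve_left hbW) with ⟨hbL, -⟩ | ⟨-, hPred⟩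
  · have := (mem_union.1 (removal_subset_R_union hrel hW hb)).resolve_right hbW
    exact absurd hbL (mem_R.1 this).2
  · rcases mem_union.1 (hPred ha) with haR | haW
    · exact forcedBy_subset_removal <| mem_forcedBy.2 <|
        .inr ⟨haR, fun c hc => hPred ((isBwdClosed_Pred hwf).mem_of_reach (mem_Pred.1 hc).2 ha)⟩
    · exact subset_removal haW

theorem forcedBy_union_subset_of_fwd (hKW : K ⊆ G.left ∪ W) (hK : G.IsFwdClosed K) :
    G.forcedBy (K ∪ U) ⊆ K ∪ G.forcedBy (W ∪ U) := by
  intro a ha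
  by_cases haK : a ∈ K
  · exact mem_union_left _ haK
  refine mem_union_right _ (mem_forcedBy.2 ?_)
  rcases mem_forcedBy.1 ha with ⟨haL, hSucc⟩ | ⟨haR, hPred⟩
  · refine .inl ⟨haL, fun c hc => ?_⟩
    have := hSucc hc
    have hcK : c ∈ K → c ∈ G.left ∪ W := fun h => hKW h
    simp only [mem_union] at this hcK ⊢
    tauto
  · refine .inr ⟨haR, fun c hc => ?_⟩
    have := hPred hc
    have hcK := disjoint_left.1 (hK.disjoint_Pred haK) hc
    simp only [mem_union] at this ⊢
    tauto

theorem forcedBy_union_subset_of_bwd (hKW : K ⊆ G.R ∪ W) (hK : G.IsBwdClosed K) :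
    G.forcedBy (K ∪ U) ⊆ K ∪ G.forcedBy (W ∪ U) := by
  intro a ha
  by_cases haK : a ∈ K
  · exact mem_union_left _ haK
  refine mem_union_right _ (mem_forcedBy.2 ?_)
  rcases mem_forcedBy.1 ha with ⟨haL, hSucc⟩ | ⟨haR, hPred⟩
  · refine .inl ⟨haL, fun c hc => ?_⟩
    have := hSucc hc
    have hcK := disjoint_left.1 (hK.disjoint_Succ haK) hc
    simp only [mem_union] at this ⊢
    tauto
  · refine .inr ⟨haR, fun c hc => ?_⟩
    have := hPred hc
    have hcK : c ∈ K → c ∈ G.R ∪ W := fun h => hKW h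
    simp only [mem_union] at this hcK ⊢
    tauto

theorem removal_removal_union (hwf : G.WF) (hrel : G.Relevant)
    (hW : G.IsFwdClosed W ∨ G.IsBwdClosed W) (U : Finset α) :
    G.removal (G.removal W ∪ U) = G.removal (W ∪ U) := by
  refine (removal_mono (union_subset_union_left subset_removal)).antisymm' ?_
  have hK : G.removal W ⊆ G.removal (W ∪ U) := removal_mono subset_union_left
  have hF : G.forcedBy (G.removal W ∪ U) ⊆ G.removal W ∪ G.forcedBy (W ∪ U) := hW.elim
    (fun hW => forcedBy_union_subset_of_fwd (removal_subset_left_union hrel hW)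
      (isFwdClosed_removal hwf hrel hW))
    (fun hW => forcedBy_union_subset_of_bwd (removal_subset_R_union hrel hW)
      (isBwdClosed_removal hwf hrel hW))
  exact union_subset (union_subset hK (subset_union_right.trans subset_removal))
    (hF.trans (union_subset hK forcedBy_subset_removal))

theorem removal_eq_of_subset_of_subset_removal (hwf : G.WF) (hrel : G.Relevant)
    (hW : G.IsFwdClosed W ∨ G.IsBwdClosed W) (hWU : W ⊆ U) (hUW : U ⊆ G.removal W) :
    G.removal U = G.removal W := by
  refine (removal_mono hWU).antisymm' ?_
  calc G.removal U ⊆ G.removal (G.removal W ∪ ∅) := removal_mono (by rwa [union_empty])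
    _ = G.removal W := by rw [removal_removal_union hwf hrel hW, union_empty]

theorem removal_union_of_fwd_of_bwd (hW : G.IsFwdClosed W) (hU : G.IsBwdClosed U) :
    G.removal (W ∪ U) = G.removal W ∪ G.removal U := by
  refine (union_subset (removal_mono subset_union_left) (removal_mono subset_union_right)).antisymm'
    ?_
  intro a ha
  simp only [removal, mem_union, mem_forcedBy] at ha ⊢
  rcases ha with (haW | haU) | (⟨haL, hSucc⟩ | ⟨haR, hPred⟩)
  · tauto
  · tauto
  · by_cases haU : a ∈ U
    · tauto
    · refine .inl (.inr (.inl ⟨haL, fun c hc => ?_⟩))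
      have := hSucc hc
      have hcU := disjoint_left.1 (hU.disjoint_Succ haU) hc
      simp only [mem_union] at this ⊢
      tauto
  · by_cases haW : a ∈ W
    · tauto
    · refine .inr (.inr (.inr ⟨haR, fun c hc => ?_⟩))
      have := hPred hc
      have hcW := disjoint_left.1 (hW.disjoint_Pred haW) hc
      simp only [mem_union] at this ⊢
      tauto

theorem isFwdClosed_or_isBwdClosed_removal (hwf : G.WF) (hrel : G.Relevant)
    (hW : G.IsFwdClosed W ∨ G.IsBwdClosed W) :
    G.IsFwdClosed (G.removal W) ∨ G.IsBwdClosed (G.removal W) :=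
  hW.imp (isFwdClosed_removal hwf hrel) (isBwdClosed_removal hwf hrel)

theorem disjoint_removal_Succ_removal_Pred (hwf : G.WF) (hrel : G.Relevant) (hx : x ∈ G.V)
    (hy : y ∉ G.left) (h : x ∉ G.removal (G.Pred y)) :
    Disjoint (G.removal (G.Succ x)) (G.removal (G.Pred y)) := by
  have hS : G.IsFwdClosed (G.Succ x) := isFwdClosed_Succ hwf
  have hP : G.IsBwdClosed (G.Pred y) := isBwdClosed_Pred hwf
  refine disjoint_left.2 fun a haT haP => h ?_
  rcases mem_union.1 (removal_subset_left_union hrel hS haT) with haL | haS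
  · rcases mem_union.1 (removal_subset_R_union hrel hP haP) with haR | haP'
    · exact absurd haL (mem_R.1 haR).2
    · have hyT := (isFwdClosed_removal hwf hrel hS).mem_of_reach (mem_Pred.1 haP').2 haT
      have hyS := (mem_union.1 (removal_subset_left_union hrel hS hyT)).resolve_left hy
      exact subset_removal (mem_Pred.2 ⟨hx, (mem_Succ.1 hyS).2⟩)
  · exact (isBwdClosed_removal hwf hrel hP).mem_of_reach (mem_Succ.1 haS).2 haP

theorem move_of_mem_left (hwf : G.WF) (hx : x ∈ G.left) :
    G.move x = G.erase (G.removal (G.Succ x)) := by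
  rw [move, Rmv_of_mem_left hwf hx]

theorem move_of_not_mem_left (hwf : G.WF) (hy : y ∉ G.left) :
    G.move y = G.erase (G.removal (G.Pred y)) := by
  rw [move, Rmv_of_not_mem_left hwf hy]

theorem Rmv_erase_removal_of_mem_left (hwf : G.WF) (hrel : G.Relevant)
    (hW : G.IsFwdClosed W ∨ G.IsBwdClosed W) (hx : x ∈ G.left) (hxK : x ∉ G.removal W) :
    (G.erase (G.removal W)).Rmv x = G.removal (W ∪ G.Succ x) \ G.removal W := by
  rw [Rmv_erase_of_mem_left hwf (isFwdClosed_or_isBwdClosed_removal hwf hrel hW) hx hxK,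
    removal_removal_union hwf hrel hW]

theorem Rmv_erase_removal_of_not_mem_left (hwf : G.WF) (hrel : G.Relevant)
    (hW : G.IsFwdClosed W ∨ G.IsBwdClosed W) (hy : y ∉ G.left) (hyK : y ∉ G.removal W) :
    (G.erase (G.removal W)).Rmv y = G.removal (W ∪ G.Pred y) \ G.removal W := by
  rw [Rmv_erase_of_not_mem_left hwf (isFwdClosed_or_isBwdClosed_removal hwf hrel hW) hy hyK,
    removal_removal_union hwf hrel hW]

theorem move_erase_removal_of_mem_left (hwf : G.WF) (hrel : G.Relevant)
    (hW : G.IsFwdClosed W ∨ G.IsBwdClosed W) (hx : x ∈ G.left) (hxK : x ∉ G.removal W) :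
    (G.erase (G.removal W)).move x = G.erase (G.removal (W ∪ G.Succ x)) :=
  erase_move_of_Rmv_eq (removal_mono subset_union_left)
    (Rmv_erase_removal_of_mem_left hwf hrel hW hx hxK)

theorem move_erase_removal_of_not_mem_left (hwf : G.WF) (hrel : G.Relevant)
    (hW : G.IsFwdClosed W ∨ G.IsBwdClosed W) (hy : y ∉ G.left) (hyK : y ∉ G.removal W) :
    (G.erase (G.removal W)).move y = G.erase (G.removal (W ∪ G.Pred y)) :=
  erase_move_of_Rmv_eq (removal_mono subset_union_left)
    (Rmv_erase_removal_of_not_mem_left hwf hrel hW hy hyK)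

theorem move_move_of_mem_left (hwf : G.WF) (hrel : G.Relevant) (hx : x ∈ G.left)
    (hx' : x' ∈ G.left) : (G.move x').move x = G.erase (G.removal (G.Succ x' ∪ G.Succ x)) := by
  have hS : G.IsFwdClosed (G.Succ x') := isFwdClosed_Succ hwf
  have hK : G.IsFwdClosed (G.removal (G.Succ x')) := isFwdClosed_removal hwf hrel hS
  rw [move_of_mem_left hwf hx']
  by_cases hxK : x ∈ G.removal (G.Succ x')
  · -- `x` is already deleted, so the second move only deletes the (empty) forced set.
    rw [erase_move_of_Rmv_eq subset_removal (Rmv_erase_of_mem hwf (.inl hK) hxK),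
      removal_eq_of_subset_of_subset_removal hwf hrel (.inl hS) subset_removal subset_rfl,
      removal_eq_of_subset_of_subset_removal hwf hrel (.inl hS) subset_union_left
        (union_subset subset_removal (hK.Succ_subset hxK))]
  · exact move_erase_removal_of_mem_left hwf hrel (.inl hS) hx hxK

end Influence.Pos

/-- commuting two moves. -/
theorem influence_commute_moves {α : Type} [DecidableEq α] (G : Pos α)
    (hwf : G.WF) (hrel : G.Relevant) (x x' y : α)
    (hx : x ∈ G.left) (hx' : x' ∈ G.left) (hy : y ∈ G.R) :
    (x' ∈ G.Rmv x → G.Rmv x' ⊆ G.Rmv x ∧ (G.move x').move x = G.move x) ∧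
    (x' ∉ G.Rmv x → x ∉ G.Rmv x' → (G.move x').move x = (G.move x).move x') ∧
    (x ∉ G.Rmv y → (G.move x).Rmv y = G.Rmv y ∧ (G.move x).move y = (G.move y).move x) := by
  have hS : G.IsFwdClosed (G.Succ x) := isFwdClosed_Succ hwf
  have hP : G.IsBwdClosed (G.Pred y) := isBwdClosed_Pred hwf
  have hyL : y ∉ G.left := (mem_R.1 hy).2
  refine ⟨fun h1 => ?_, fun _ _ => ?_, fun h3 => ?_⟩
  · rw [Rmv_of_mem_left hwf hx] at h1
    have hT : G.removal (G.Succ x' ∪ G.Succ x) = G.removal (G.Succ x) :=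
      removal_eq_of_subset_of_subset_removal hwf hrel (.inl hS) subset_union_right
        (union_subset ((isFwdClosed_removal hwf hrel hS).Succ_subset h1) subset_removal)
    rw [Rmv_of_mem_left hwf hx', Rmv_of_mem_left hwf hx, move_move_of_mem_left hwf hrel hx hx',
      move_of_mem_left hwf hx, ← hT]
    exact ⟨removal_mono subset_union_left, rfl⟩
  · rw [move_move_of_mem_left hwf hrel hx hx', move_move_of_mem_left hwf hrel hx' hx, union_comm]
  · rw [Rmv_of_not_mem_left hwf hyL] at h3 ⊢
    have hdisj := disjoint_removal_Succ_removal_Pred hwf hrel (hwf.2 hx) hyL h3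
    have hyT : y ∉ G.removal (G.Succ x) :=
      disjoint_right.1 hdisj (subset_removal (mem_Pred.2 ⟨(mem_R.1 hy).1, .refl⟩))
    rw [move_of_mem_left hwf hx, move_of_not_mem_left hwf hyL,
      Rmv_erase_removal_of_not_mem_left hwf hrel (.inl hS) hyL hyT,
      move_erase_removal_of_not_mem_left hwf hrel (.inl hS) hyL hyT,
      move_erase_removal_of_mem_left hwf hrel (.inr hP) hx h3, union_comm (G.Pred y),
      removal_union_of_fwd_of_bwd hS hP, union_sdiff_left, hdisj.symm.sdiff_eq_left]
    exact ⟨rfl, rfl⟩
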